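/- Let $c > 0$, $0 < \alpha < 1$, and let $(v_n)_{n > 1}$ be a real sequence with $v_n \in (0,1)$ such that $n^{(1+\alpha)/2}\,|v_n - \rho_n|$ is bounded, where $\rho_n = 1 - c\,n^{-\alpha}$. Define $\widehat{\alpha}_n = (\ln c - \ln(1 - v_n))/\ln n$. Then $(\ln n)\, n^{(1-\alpha)/2}\, |\widehat{\alpha}_n - \alpha|$ is bounded, and in particular $\widehat{\alpha}_n \to \alpha$. -/

import Mathlib

open Filter Real Set

/-!
Write `b = c n^{-α} = 1 - ρ n` and `a = 1 - v n`. Then `log n · (α̂ₙ - α) = log b - log a`, and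
the hypothesis says `|a - b| ≤ M n^{-(1+α)/2}`, which is eventually at most `b / 2` because `α < 1`.
In that regime `|log a - log b| ≤ 2 |a - b| / b` (`log` is `2/b`-Lipschitz on `[b/2, ∞)`),
so `n^{(1-α)/2} |log a - log b| ≤ (2/c) n^{(1+α)/2} |a - b| ≤ 2M/c`.
-/

lemma Real.abs_log_sub_log_le_of_abs_sub_le_half {a b : ℝ} (hb : 0 < b) (hab : |a - b| ≤ b / 2) :
    |log a - log b| ≤ 2 * |a - b| / b := by
  have hba : b / 2 ≤ a := by linarith [neg_abs_le (a - b)]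
  have ha : 0 < a := by linarith
  rw [abs_sub_le_iff]
  constructor
  · calc log a - log b = log (a / b) := (log_div ha.ne' hb.ne').symm
      _ ≤ a / b - 1 := log_le_sub_one_of_pos (div_pos ha hb)
      _ = (a - b) / b := by field_simp
      _ ≤ 2 * |a - b| / b := by
        gcongr
        linarith [le_abs_self (a - b), abs_nonneg (a - b)]
  · calc log b - log a = log (b / a) := (log_div hb.ne' ha.ne').symm
      _ ≤ b / a - 1 := log_le_sub_one_of_pos (div_pos hb ha)
      _ = (b - a) / a := by field_simp
      _ ≤ |a - b| / (b / 2) :=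
        div_le_div₀ (abs_nonneg _) (by linarith [neg_abs_le (a - b)]) (by positivity) hba
      _ = 2 * |a - b| / b := by field_simp

/-- Applied with `s = n^{(1-α)/2}` and `p = n^{(1+α)/2}`, so that `c * (s / p) = c n^{-α}`. -/
lemma mul_abs_log_sub_log_le {a c s p M : ℝ} (hc : 0 < c) (hs : 0 < s) (hp : 0 < p)
    (hM : p * |a - c * (s / p)| ≤ M) (hMs : 2 * M / c ≤ s) :
    s * |log a - log (c * (s / p))| ≤ 2 * M / c := by
  have hb : 0 < c * (s / p) := by positivity
  have hclose : |a - c * (s / p)| ≤ c * (s / p) / 2 := by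
    rw [div_le_iff₀ hc] at hMs
    rw [← mul_le_mul_iff_right₀ hp]
    calc p * |a - c * (s / p)| ≤ M := hM
      _ ≤ p * (c * (s / p) / 2) := by field_simp; linarith
  calc s * |log a - log (c * (s / p))|
      ≤ s * (2 * |a - c * (s / p)| / (c * (s / p))) := by
        gcongr
        exact abs_log_sub_log_le_of_abs_sub_le_half hb hclose
    _ = 2 * (p * |a - c * (s / p)|) / c := by field_simp
    _ ≤ 2 * M / c := by gcongr

lemma log_mul_abs_div_log_sub_eq {x c a α : ℝ} (hx : 1 < x) (hc : 0 < c) :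
    log x * |(log c - log a) / log x - α| = |log a - log (c * x ^ (-α))| := by
  have hlog : 0 < log x := log_pos hx
  rw [log_mul hc.ne' (by positivity), log_rpow (by linarith), abs_sub_comm, ← abs_of_pos hlog,
    ← abs_mul, abs_of_pos hlog]
  congr 1
  field_simp
  ring

lemma Real.rpow_neg_eq_rpow_div_rpow {x : ℝ} (hx : 0 < x) (α : ℝ) :
    x ^ (-α) = x ^ ((1 - α) / 2) / x ^ ((1 + α) / 2) := by
  rw [← rpow_sub hx]
  ring_nf

lemma exists_forall_le_of_eventually_le {f : ℕ → ℝ} {M : ℝ} (h : ∀ᶠ n in atTop, f n ≤ M) :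
    ∃ M' : ℝ, ∀ n, f n ≤ M' := by
  obtain ⟨M', hM'⟩ := (isBoundedUnder_of_eventually_le h).bddAbove_range
  exact ⟨M', fun n => hM' (mem_range_self n)⟩

lemma tendsto_of_mul_abs_sub_le {ι : Type*} {l : Filter ι} {x g : ι → ℝ} {a M : ℝ}
    (hg : Tendsto g l atTop) (h : ∀ᶠ i in l, g i * |x i - a| ≤ M) : Tendsto x l (nhds a) := by
  rw [tendsto_iff_norm_sub_tendsto_zero]
  refine squeeze_zero' (Eventually.of_forall fun _ => norm_nonneg _) ?_
    ((tendsto_const_nhds (x := M)).div_atTop hg)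
  filter_upwards [h, hg.eventually_gt_atTop 0] with i hi hgi
  rw [le_div_iff₀ hgi, Real.norm_eq_abs, mul_comm]
  exact hi

theorem stmt_17_general (c α : ℝ) (hc : 0 < c) (hα : 0 < α ∧ α < 1)
    (v ρ : ℕ → ℝ) (hρ : ∀ n : ℕ, ρ n = 1 - c * (n : ℝ) ^ (-α))
    (hbd : ∃ M : ℝ, ∀ n : ℕ, (n : ℝ) ^ ((1 + α) / 2) * |v n - ρ n| ≤ M) :
    (∃ M : ℝ, ∀ n : ℕ, 1 < n →
      Real.log n * (n : ℝ) ^ ((1 - α) / 2) *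
        |(Real.log c - Real.log (1 - v n)) / Real.log n - α| ≤ M) ∧
    Tendsto (fun n : ℕ => (Real.log c - Real.log (1 - v n)) / Real.log n)
      atTop (nhds α) := by
  obtain ⟨M, hM⟩ := hbd
  have hs : Tendsto (fun n : ℕ => (n : ℝ) ^ ((1 - α) / 2)) atTop atTop :=
    (tendsto_rpow_atTop (by linarith)).comp tendsto_natCast_atTop_atTop
  have hrate : ∀ᶠ n : ℕ in atTop, Real.log n * (n : ℝ) ^ ((1 - α) / 2) *
      |(Real.log c - Real.log (1 - v n)) / Real.log n - α| ≤ 2 * M / c := by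
    filter_upwards [eventually_gt_atTop 1, hs.eventually_ge_atTop (2 * M / c)] with n hn hsn
    have hx : (1 : ℝ) < n := by exact_mod_cast hn
    have hdist : v n - ρ n = -(1 - v n - c * (n : ℝ) ^ (-α)) := by rw [hρ]; ring
    rw [mul_comm (log (n : ℝ)), mul_assoc, log_mul_abs_div_log_sub_eq hx hc]
    have hMn := hM n
    rw [hdist, abs_neg, rpow_neg_eq_rpow_div_rpow (by linarith)] at hMn
    rw [rpow_neg_eq_rpow_div_rpow (by linarith)]
    exact mul_abs_log_sub_log_le hc (by positivity) (by positivity) hMn hsn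
  obtain ⟨B, hB⟩ := exists_forall_le_of_eventually_le hrate
  refine ⟨⟨B, fun n _ => hB n⟩, tendsto_of_mul_abs_sub_le ?_ hrate⟩
  exact (tendsto_log_atTop.comp tendsto_natCast_atTop_atTop).atTop_mul_atTop₀ hs

theorem stmt_17 (c α : ℝ) (hc : 0 < c) (hα : 0 < α ∧ α < 1)
    (v ρ : ℕ → ℝ) (hρ : ∀ n : ℕ, ρ n = 1 - c * (n : ℝ) ^ (-α))
    (hv : ∀ n : ℕ, 1 < n → v n ∈ Ioo (0 : ℝ) 1)
    (hbd : ∃ M : ℝ, ∀ n : ℕ, (n : ℝ) ^ ((1 + α) / 2) * |v n - ρ n| ≤ M) :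
    (∃ M : ℝ, ∀ n : ℕ, 1 < n →
      Real.log n * (n : ℝ) ^ ((1 - α) / 2) *
        |(Real.log c - Real.log (1 - v n)) / Real.log n - α| ≤ M) ∧
    Tendsto (fun n : ℕ => (Real.log c - Real.log (1 - v n)) / Real.log n)
      atTop (nhds α) :=
  stmt_17_general c α hc hα v ρ hρ hbd
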